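/- arXiv:1511.03801 — 4 statements merged into one kernel-verified Lean document; each statement's English description precedes it below -/
import Mathlib

section
/- Let $1<p<2\alpha+1$, $a,b,S>0$, $\gamma=2\alpha+1-p$, and $f(y)=y^{(p-1)/2}-bSy^{\alpha}-aS$. If $ab^{(p-1)/\gamma}<\gamma\left[\frac{(p-1)^{p-1}}{(2\alpha S)^{2\alpha}}\right]^{1/\gamma}$, then the equation $f(y)=0$ has exactly two solutions in $(0,\infty)$. -/
/-!
Write `q = (p - 1) / 2 < α`. The derivative of `f` is `y ^ (q - 1) * (q - α b S y ^ (α - q))`,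
so `f` increases up to the critical point `y₀` where `α b S y₀ ^ (α - q) = q` and decreases
after it, while `f 0 = -a S < 0` and `f → -∞`. At the critical point
`f y₀ = (γ / 2α) y₀ ^ q - a S`, and the hypothesis on `a b ^ ((p - 1) / γ)` is exactly
`f y₀ > 0`. The intermediate value theorem gives one zero on each side of `y₀`, and strict
monotonicity on each side excludes any other.
-/

open Real Set Filter

theorem exists_two_zeros_of_unimodal {g : ℝ → ℝ} {l x₀ : ℝ} (hlx : l ≤ x₀)
    (hcont : ContinuousOn g (Ici l)) (hmono : StrictMonoOn g (Icc l x₀))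
    (hanti : StrictAntiOn g (Ici x₀)) (hl : g l < 0) (hpeak : 0 < g x₀)
    (hbot : Tendsto g atTop atBot) :
    ∃ y₁ y₂ : ℝ, l < y₁ ∧ y₁ < y₂ ∧ g y₁ = 0 ∧ g y₂ = 0 ∧
      ∀ y, l < y → g y = 0 → y = y₁ ∨ y = y₂ := by
  obtain ⟨v, hxv, hv⟩ := ((eventually_gt_atTop x₀).and (hbot.eventually_lt_atBot 0)).exists
  obtain ⟨y₁, ⟨hly₁, hy₁x⟩, hy₁⟩ :=
    intermediate_value_Ioo hlx (hcont.mono Icc_subset_Ici_self) ⟨hl, hpeak⟩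
  obtain ⟨y₂, ⟨hxy₂, hy₂v⟩, hy₂⟩ := intermediate_value_Ioo' hxv.le
    (hcont.mono (Icc_subset_Ici_self.trans (Ici_subset_Ici.mpr hlx))) ⟨hv, hpeak⟩
  refine ⟨y₁, y₂, hly₁, hy₁x.trans hxy₂, hy₁, hy₂, fun y hly hy => ?_⟩
  rcases lt_trichotomy y x₀ with hyx | rfl | hxy
  · exact .inl (hmono.injOn ⟨hly.le, hyx.le⟩ ⟨hly₁.le, hy₁x.le⟩ (hy.trans hy₁.symm))
  · exact absurd hy hpeak.ne'
  · exact .inr (hanti.injOn hxy.le hxy₂.le (hy.trans hy₂.symm))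

section RpowDifference

variable {q r c d : ℝ}

theorem continuous_rpow_sub_mul_rpow (hq : 0 ≤ q) (hr : 0 ≤ r) :
    Continuous fun y : ℝ => y ^ q - c * y ^ r - d := by
  fun_prop (disch := assumption)

theorem hasDerivAt_rpow_sub_mul_rpow {x : ℝ} (hx : 0 < x) :
    HasDerivAt (fun y : ℝ => y ^ q - c * y ^ r - d)
      (x ^ (q - 1) * (q - c * r * x ^ (r - q))) x := by
  refine (((hasDerivAt_rpow_const (p := q) (.inl hx.ne')).sub
    ((hasDerivAt_rpow_const (p := r) (.inl hx.ne')).const_mul c)).sub_const d).congr_deriv ?_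
  have hsplit : x ^ (r - 1) = x ^ (q - 1) * x ^ (r - q) := by
    rw [← rpow_add hx]; ring_nf
  rw [hsplit]; ring

section Critical

variable {y₀ : ℝ} (hq : 0 < q) (hqr : q < r) (hy₀ : 0 < y₀) (hcrit : c * r * y₀ ^ (r - q) = q)
include hq hqr hy₀ hcrit

theorem strictMonoOn_rpow_sub_mul_rpow :
    StrictMonoOn (fun y : ℝ => y ^ q - c * y ^ r - d) (Icc 0 y₀) := by
  refine strictMonoOn_of_deriv_pos (convex_Icc 0 y₀)
    (continuous_rpow_sub_mul_rpow hq.le (hq.trans hqr).le).continuousOn fun x hx => ?_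
  rw [interior_Icc] at hx
  have hcr : 0 < c * r := pos_of_mul_pos_left (hcrit ▸ hq) (rpow_pos_of_pos hy₀ _).le
  have hlt : x ^ (r - q) < y₀ ^ (r - q) :=
    (rpow_lt_rpow_iff hx.1.le hy₀.le (sub_pos.mpr hqr)).mpr hx.2
  have hscaled := mul_lt_mul_of_pos_left hlt hcr
  rw [(hasDerivAt_rpow_sub_mul_rpow hx.1).deriv]
  exact mul_pos (rpow_pos_of_pos hx.1 _) (by linarith)

theorem strictAntiOn_rpow_sub_mul_rpow :
    StrictAntiOn (fun y : ℝ => y ^ q - c * y ^ r - d) (Ici y₀) := by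
  refine strictAntiOn_of_deriv_neg (convex_Ici y₀)
    (continuous_rpow_sub_mul_rpow hq.le (hq.trans hqr).le).continuousOn fun x hx => ?_
  rw [interior_Ici] at hx
  have hx₀ : 0 < x := hy₀.trans hx
  have hcr : 0 < c * r := pos_of_mul_pos_left (hcrit ▸ hq) (rpow_pos_of_pos hy₀ _).le
  have hlt : y₀ ^ (r - q) < x ^ (r - q) :=
    (rpow_lt_rpow_iff hy₀.le hx₀.le (sub_pos.mpr hqr)).mpr hx
  have hscaled := mul_lt_mul_of_pos_left hlt hcr
  rw [(hasDerivAt_rpow_sub_mul_rpow hx₀).deriv]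
  exact mul_neg_of_pos_of_neg (rpow_pos_of_pos hx₀ _) (by linarith)

end Critical

theorem rpow_sub_mul_rpow_eq_of_crit {y₀ : ℝ} (hr : r ≠ 0) (hy₀ : 0 < y₀)
    (hcrit : c * r * y₀ ^ (r - q) = q) :
    y₀ ^ q - c * y₀ ^ r - d = (1 - q / r) * y₀ ^ q - d := by
  have hsplit : y₀ ^ r = y₀ ^ (r - q) * y₀ ^ q := by
    rw [← rpow_add hy₀]; ring_nf
  have hcoef : c * y₀ ^ (r - q) = q / r := by
    rw [eq_div_iff hr]; linear_combination hcrit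
  rw [hsplit, ← mul_assoc, hcoef]
  ring

theorem tendsto_rpow_sub_mul_rpow_atTop (hr : 0 < r) (hqr : q < r) (hc : 0 < c) :
    Tendsto (fun y : ℝ => y ^ q - c * y ^ r - d) atTop atBot := by
  have hfactor : (fun y : ℝ => y ^ r * (y ^ (-(r - q)) - c) + -d)
      =ᶠ[atTop] fun y => y ^ q - c * y ^ r - d := by
    filter_upwards [eventually_gt_atTop 0] with y hy
    rw [mul_sub, ← rpow_add hy]
    ring_nf
  refine (tendsto_atBot_add_const_right _ _ ?_).congr' hfactor
  exact (tendsto_rpow_atTop hr).atTop_mul_neg (by linarith : (0 : ℝ) - c < 0)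
    ((tendsto_rpow_neg_atTop (sub_pos.mpr hqr)).sub_const c)

end RpowDifference

theorem threshold_condition_iff {p α a b S γ : ℝ} (hp1 : 1 < p) (hα : 0 < α) (hb : 0 < b)
    (hS : 0 < S) (hγ : γ = 2 * α + 1 - p) (hγpos : 0 < γ) :
    a * b ^ ((p - 1) / γ) < γ * ((p - 1) ^ (p - 1) / (2 * α * S) ^ (2 * α)) ^ (1 / γ) ↔
      a * S < γ / (2 * α) * ((p - 1) / (2 * α * b * S)) ^ ((p - 1) / γ) := by
  have hp : 0 < p - 1 := by linarith
  have hT : 0 < 2 * α * S := by positivity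
  have hexp : 2 * α * (1 / γ) = 1 + (p - 1) / γ := by
    rw [hγ] at hγpos ⊢; field_simp; ring
  rw [div_rpow (by positivity) (by positivity), ← rpow_mul hp.le, ← rpow_mul hT.le, hexp,
    rpow_add hT, rpow_one, show 2 * α * b * S = b * (2 * α * S) by ring,
    div_rpow hp.le (by positivity), mul_rpow hb.le hT.le, ← mul_div_assoc, ← mul_div_assoc,
    lt_div_iff₀ (by positivity), div_mul_div_comm, lt_div_iff₀ (by positivity)]
  ring_nf

theorem stmt3 (p α a b S γ : ℝ) (hp1 : 1 < p) (hp2 : p < 2 * α + 1)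
    (hα : 0 < α) (ha : 0 < a) (hb : 0 < b) (hS : 0 < S)
    (hγ : γ = 2 * α + 1 - p)
    (f : ℝ → ℝ) (hf : ∀ y, f y = y ^ ((p - 1) / 2) - b * S * y ^ α - a * S)
    (hcond : a * b ^ ((p - 1) / γ) < γ * ((p - 1) ^ (p - 1) / (2 * α * S) ^ (2 * α)) ^ (1 / γ)) :
    ∃ y₁ y₂ : ℝ, 0 < y₁ ∧ y₁ < y₂ ∧ f y₁ = 0 ∧ f y₂ = 0 ∧
      ∀ y, 0 < y → f y = 0 → y = y₁ ∨ y = y₂ := by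
  have hγpos : 0 < γ := by rw [hγ]; linarith
  set q := (p - 1) / 2 with hq_def
  have hq : 0 < q := by rw [hq_def]; linarith
  have hαq : α - q = γ / 2 := by rw [hγ, hq_def]; ring
  set y₀ := ((p - 1) / (2 * α * b * S)) ^ (2 / γ) with hy₀_def
  have hy₀ : 0 < y₀ := by positivity
  have hcrit : b * S * α * y₀ ^ (α - q) = q := by
    rw [hαq, hy₀_def, ← rpow_mul (by positivity), show 2 / γ * (γ / 2) = 1 by field_simp,
      rpow_one, hq_def]
    field_simp
  have hpeak : y₀ ^ q = ((p - 1) / (2 * α * b * S)) ^ ((p - 1) / γ) := by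
    rw [hy₀_def, ← rpow_mul (by positivity), hq_def]
    congr 1
    field_simp
  obtain rfl : f = fun y => y ^ q - b * S * y ^ α - a * S := funext hf
  refine exists_two_zeros_of_unimodal hy₀.le
    (continuous_rpow_sub_mul_rpow hq.le hα.le).continuousOn
    (strictMonoOn_rpow_sub_mul_rpow hq (by linarith) hy₀ hcrit)
    (strictAntiOn_rpow_sub_mul_rpow hq (by linarith) hy₀ hcrit) ?_ ?_
    (tendsto_rpow_sub_mul_rpow_atTop hα (by linarith) (by positivity))
  · simp only [zero_rpow hq.ne', zero_rpow hα.ne']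
    linarith [mul_pos ha hS]
  · have hcoef : 1 - q / α = γ / (2 * α) := by
      rw [hγ, hq_def]; field_simp; ring
    rw [rpow_sub_mul_rpow_eq_of_crit hα.ne' hy₀ hcrit, hcoef, hpeak]
    linarith [(threshold_condition_iff hp1 hα hb hS hγ hγpos).mp hcond]
end

section
/- Let $1<p<2\alpha+1$, $a,b,S>0$, $\gamma=2\alpha+1-p$, and $f(y)=y^{(p-1)/2}-bSy^{\alpha}-aS$. If $ab^{(p-1)/\gamma}>\gamma\left[\frac{(p-1)^{p-1}}{(2\alpha S)^{2\alpha}}\right]^{1/\gamma}$, then $f(y)<0$ for all $y>0$; in particular $f(y)=0$ has no solution in $(0,\infty)$. -/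
/-!
Write `q = (p - 1) / 2 < m = α`. Weighted AM-GM with weights `q / m` and `1 - q / m` shows that
`y ^ q - b S y ^ m` never exceeds its maximum `γ / (2α) · ((p - 1) / (2α b S)) ^ ((p - 1) / γ)`,
and the hypothesis on `a` says exactly that `a S` is larger than this maximum.
-/

open Real

/-- The maximum of `y ↦ y ^ q - c * y ^ m` on `[0, ∞)` for `0 < q < m`, attained where
`y ^ (m - q) = q / (m * c)`. -/
noncomputable def rpowGapMax (q m c : ℝ) : ℝ := (m - q) / m * (q / (m * c)) ^ (q / (m - q))

theorem rpow_le_mul_rpow_add_rpowGapMax {q m c y : ℝ} (hq : 0 < q) (hqm : q < m) (hc : 0 < c)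
    (hy : 0 ≤ y) : y ^ q ≤ c * y ^ m + rpowGapMax q m c := by
  have hm : 0 < m := hq.trans hqm
  have hmq : 0 < m - q := sub_pos.2 hqm
  set K := (q / (m * c)) ^ (q / (m - q))
  have hK : K ^ ((m - q) / m) = (q / (m * c)) ^ (q / m) := by
    rw [← rpow_mul (by positivity)]
    congr 1
    field_simp
  have hym : (y ^ m) ^ (q / m) = y ^ q := by
    rw [← rpow_mul hy]
    congr 1
    field_simp
  have amgm := geom_mean_le_arith_mean2_weighted (w₁ := q / m) (w₂ := (m - q) / m)
    (p₁ := m * c / q * y ^ m) (p₂ := K) (by positivity) (by positivity) (by positivity)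
    (by positivity) (by field_simp; ring)
  calc y ^ q = (m * c / q * y ^ m) ^ (q / m) * K ^ ((m - q) / m) := by
        rw [hK, mul_rpow (by positivity) (by positivity), hym, mul_right_comm,
          ← mul_rpow (by positivity) (by positivity), div_mul_div_cancel₀ (by positivity),
          div_self (by positivity), one_rpow, one_mul]
    _ ≤ q / m * (m * c / q * y ^ m) + (m - q) / m * K := amgm
    _ = c * y ^ m + rpowGapMax q m c := by
        congr 1
        field_simp

theorem rpowGapMax_lt_of_lt {p α a b S γ : ℝ} (hp1 : 1 < p) (hb : 0 < b) (hS : 0 < S)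
    (hγ : γ = 2 * α + 1 - p) (hγpos : 0 < γ)
    (hcond : γ * ((p - 1) ^ (p - 1) / (2 * α * S) ^ (2 * α)) ^ (1 / γ) < a * b ^ ((p - 1) / γ)) :
    rpowGapMax ((p - 1) / 2) α (b * S) < a * S := by
  set e := (p - 1) / γ
  have hp : 0 < p - 1 := by linarith
  have hA : 0 < 2 * α * S := by nlinarith
  have hroot : ((p - 1) ^ (p - 1) / (2 * α * S) ^ (2 * α)) ^ (1 / γ)
      = (p - 1) ^ e / (2 * α * S * (2 * α * S) ^ e) := by
    rw [div_rpow (by positivity) (by positivity), ← rpow_mul hp.le, ← rpow_mul hA.le]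
    have h2α : 2 * α * (1 / γ) = 1 + e := by
      simp only [e]
      field_simp
      linarith
    rw [h2α, rpow_add hA, rpow_one, mul_one_div]
  have hbe : 0 < b ^ e := rpow_pos_of_pos hb e
  have hγ' : α - (p - 1) / 2 = γ / 2 := by rw [hγ]; ring
  calc rpowGapMax ((p - 1) / 2) α (b * S)
      = γ / (2 * α) * ((p - 1) / (2 * α * S * b)) ^ e := by
        rw [rpowGapMax, hγ', show (p - 1) / 2 / (γ / 2) = e by simp only [e]; field_simp]
        field_simp
    _ = S * (γ * ((p - 1) ^ (p - 1) / (2 * α * S) ^ (2 * α)) ^ (1 / γ)) / b ^ e := by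
        rw [hroot, div_rpow hp.le (by positivity), mul_rpow hA.le hb.le]
        field_simp
    _ < S * (a * b ^ e) / b ^ e := by gcongr
    _ = a * S := by field_simp

theorem stmt4_general (p α a b S γ : ℝ) (hp1 : 1 < p) (hp2 : p < 2 * α + 1)
    (hb : 0 < b) (hS : 0 < S)
    (hγ : γ = 2 * α + 1 - p)
    (f : ℝ → ℝ) (hf : ∀ y, f y = y ^ ((p - 1) / 2) - b * S * y ^ α - a * S)
    (hcond : a * b ^ ((p - 1) / γ) > γ * ((p - 1) ^ (p - 1) / (2 * α * S) ^ (2 * α)) ^ (1 / γ)) :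
    ∀ y, 0 < y → f y < 0 := by
  intro y hy
  have hmax := rpow_le_mul_rpow_add_rpowGapMax (q := (p - 1) / 2) (m := α) (by linarith)
    (by linarith) (mul_pos hb hS) hy.le
  have hlt := rpowGapMax_lt_of_lt hp1 hb hS hγ (by linarith) hcond
  rw [hf]
  linarith

theorem stmt4 (p α a b S γ : ℝ) (hp1 : 1 < p) (hp2 : p < 2 * α + 1)
    (hα : 0 < α) (ha : 0 < a) (hb : 0 < b) (hS : 0 < S)
    (hγ : γ = 2 * α + 1 - p)
    (f : ℝ → ℝ) (hf : ∀ y, f y = y ^ ((p - 1) / 2) - b * S * y ^ α - a * S)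
    (hcond : a * b ^ ((p - 1) / γ) > γ * ((p - 1) ^ (p - 1) / (2 * α * S) ^ (2 * α)) ^ (1 / γ)) :
    ∀ y, 0 < y → f y < 0 :=
  stmt4_general p α a b S γ hp1 hp2 hb hS hγ f hf hcond
end

section
/- Let $1<p<2\alpha+1$, $a,S>0$, $\gamma=2\alpha+1-p$. For each $b>0$ with $ab^{(p-1)/\gamma}<\gamma\left[\frac{(p-1)^{p-1}}{(2\alpha S)^{2\alpha}}\right]^{1/\gamma}$, let $0<y_1(b)<y_2(b)$ be the two solutions of $y^{(p-1)/2}-bSy^{\alpha}-aS=0$. Then $y_1(b)\to (aS)^{2/(p-1)}$ and $y_2(b)\to+\infty$ as $b\to 0^+$. -/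
/-!
Put `δ = (p - 1) / 2 < α`. For `y > 0`, `f_b(y) = y ^ δ * (1 - g_b (log y))` with
`g_b(t) = b S exp ((α - δ) t) + a S exp (-δ t)` strictly convex, so `f_b > 0` exactly on the open
interval between its two roots. Every root satisfies `y ^ δ ≥ a S`, while for any fixed
`c > (a S) ^ (1 / δ)` we have `f_b(c) → c ^ δ - a S > 0` as `b → 0⁺`; hence eventually
`y₁(b) < c < y₂(b)`, which squeezes `y₁(b)` to `(a S) ^ (1 / δ)` and pushes `y₂(b)` to infinity.
-/

open Real Set Filter Topology

lemma StrictConvexOn.const_mul {E : Type*} [AddCommMonoid E] [Module ℝ E] {s : Set E}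
    {f : E → ℝ} {c : ℝ} (hf : StrictConvexOn ℝ s f) (hc : 0 < c) :
    StrictConvexOn ℝ s fun x => c * f x :=
  ⟨hf.1, fun _ hx _ hy hxy _ _ ha hb hab => by
    have := mul_lt_mul_of_pos_left (hf.2 hx hy hxy ha hb hab) hc
    simp only [smul_eq_mul] at this ⊢
    linarith⟩

lemma strictConvexOn_exp_mul {c : ℝ} (hc : c ≠ 0) : StrictConvexOn ℝ univ fun t => exp (c * t) :=
  ⟨convex_univ, fun x _ y _ hxy a b ha hb hab => by
    have := strictConvexOn_exp.2 (mem_univ (c * x)) (mem_univ (c * y))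
      (by simpa [hc] using hxy) ha hb hab
    simpa only [smul_eq_mul, mul_add, mul_left_comm c] using this⟩

theorem StrictConvexOn.mem_Ioo_of_apply_lt {s : Set ℝ} {f : ℝ → ℝ} (hf : StrictConvexOn ℝ s f)
    {x y z : ℝ} (hx : x ∈ s) (hy : y ∈ s) (hz : z ∈ s) (hxz : x < z) (hfxz : f x = f z)
    (hfy : f y < f x) : y ∈ Ioo x z := by
  by_contra hyxz
  rcases not_and_or.1 hyxz with hyx | hzy
  · have hyx : y < x := lt_of_le_of_ne (not_lt.1 hyx) (by rintro rfl; exact hfy.false)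
    have := hf.lt_on_openSegment hy hz (hyx.trans hxz).ne
      (Ioo_subset_openSegment ⟨hyx, hxz⟩)
    rw [← hfxz, max_eq_right hfy.le] at this
    exact this.false
  · have hzy : z < y := lt_of_le_of_ne (not_lt.1 hzy) (by rintro rfl; exact (hfxz ▸ hfy).false)
    have := hf.lt_on_openSegment hx hy (hxz.trans hzy).ne (Ioo_subset_openSegment ⟨hxz, hzy⟩)
    rw [← hfxz, max_eq_left hfy.le] at this
    exact this.false

lemma rpow_sub_mul_rpow_sub_eq_mul_exp {A B δ α y : ℝ} (hy : 0 < y) :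
    y ^ δ - A * y ^ α - B =
      y ^ δ * (1 - (A * exp ((α - δ) * log y) + B * exp (-δ * log y))) := by
  have hα : y ^ δ * exp ((α - δ) * log y) = y ^ α := by
    rw [rpow_def_of_pos hy, rpow_def_of_pos hy, ← exp_add]; ring_nf
  have h0 : y ^ δ * exp (-δ * log y) = 1 := by
    rw [rpow_def_of_pos hy, ← exp_add, ← exp_zero]; ring_nf
  linear_combination A * hα + B * h0

lemma eventually_mul_rpow_lt {a e R : ℝ} (he : 0 < e) (hR : 0 < R) :
    ∀ᶠ b in 𝓝[>] 0, a * b ^ e < R := by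
  have : Tendsto (fun b : ℝ => a * b ^ e) (𝓝 0) (𝓝 0) := by
    simpa [zero_rpow he.ne'] using
      ((continuousAt_id (x := (0 : ℝ)).rpow_const (Or.inr he.le)).const_mul a).tendsto
  exact nhdsWithin_le_nhds (this.eventually_lt_const hR)

lemma rpow_inv_le_of_rpow_sub_eq_zero {A B δ α y : ℝ} (hA : 0 ≤ A) (hB : 0 ≤ B) (hδ : 0 < δ)
    (hy : 0 < y) (h : y ^ δ - A * y ^ α - B = 0) : B ^ δ⁻¹ ≤ y :=
  (rpow_inv_le_iff_of_pos hB hy.le hδ).2 (by nlinarith [mul_nonneg hA (rpow_nonneg hy.le α)])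

lemma mem_Ioo_of_rpow_sub_eq_zero {A B δ α y₁ y₂ c : ℝ} (hA : 0 < A) (hB : 0 < B) (hδ : 0 < δ)
    (hδα : δ < α) (hy₁ : 0 < y₁) (hy₁₂ : y₁ < y₂) (hc : 0 < c)
    (h₁ : y₁ ^ δ - A * y₁ ^ α - B = 0) (h₂ : y₂ ^ δ - A * y₂ ^ α - B = 0)
    (hfc : 0 < c ^ δ - A * c ^ α - B) : c ∈ Ioo y₁ y₂ := by
  let g : ℝ → ℝ := fun t => A * exp ((α - δ) * t) + B * exp (-δ * t)
  have hg : StrictConvexOn ℝ univ g :=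
    ((strictConvexOn_exp_mul (sub_pos.2 hδα).ne').const_mul hA).add
      ((strictConvexOn_exp_mul (neg_ne_zero.2 hδ.ne')).const_mul hB)
  have hg_root {y : ℝ} (hy : 0 < y) (h : y ^ δ - A * y ^ α - B = 0) : g (log y) = 1 := by
    rw [rpow_sub_mul_rpow_sub_eq_mul_exp hy, mul_eq_zero, sub_eq_zero] at h
    exact (h.resolve_left (rpow_pos_of_pos hy δ).ne').symm
  have hgc : g (log c) < 1 := by
    rw [rpow_sub_mul_rpow_sub_eq_mul_exp hc] at hfc
    exact sub_pos.1 (pos_of_mul_pos_right hfc (rpow_nonneg hc.le δ))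
  have hy₂ := hy₁.trans hy₁₂
  have hlog := hg.mem_Ioo_of_apply_lt (mem_univ _) (mem_univ _) (mem_univ _)
    (log_lt_log hy₁ hy₁₂) ((hg_root hy₁ h₁).trans (hg_root hy₂ h₂).symm)
    (hgc.trans_eq (hg_root hy₁ h₁).symm)
  exact ⟨(log_lt_log_iff hy₁ hc).1 hlog.1, (log_lt_log_iff hc hy₂).1 hlog.2⟩

lemma tendsto_nhds_and_tendsto_atTop_of_separated {ι α : Type*} [TopologicalSpace α]
    [LinearOrder α] [OrderTopology α] [NoMaxOrder α] {l : Filter ι} {L : α} {u v : ι → α}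
    (hu : ∀ᶠ i in l, L ≤ u i) (huv : ∀ c, L < c → ∀ᶠ i in l, u i < c ∧ c < v i) :
    Tendsto u l (𝓝 L) ∧ Tendsto v l atTop := by
  refine ⟨tendsto_order.2 ⟨fun c hc => hu.mono fun i hi => hc.trans_le hi,
    fun c hc => (huv c hc).mono fun i hi => hi.1⟩, tendsto_atTop.2 fun M => ?_⟩
  obtain ⟨c, hc⟩ := exists_gt (max M L)
  exact (huv c (le_max_right M L |>.trans_lt hc)).mono fun i hi =>
    ((le_max_left M L).trans hc.le).trans hi.2.le

theorem stmt8_general (p α a S γ : ℝ) (hp1 : 1 < p) (hp2 : p < 2 * α + 1)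
    (ha : 0 < a) (hS : 0 < S)
    (hγ : γ = 2 * α + 1 - p)
    (y₁ y₂ : ℝ → ℝ)
    (hsol : ∀ b : ℝ, 0 < b →
      a * b ^ ((p - 1) / γ) < γ * ((p - 1) ^ (p - 1) / (2 * α * S) ^ (2 * α)) ^ (1 / γ) →
      0 < y₁ b ∧ y₁ b < y₂ b ∧
      (y₁ b) ^ ((p - 1) / 2) - b * S * (y₁ b) ^ α - a * S = 0 ∧
      (y₂ b) ^ ((p - 1) / 2) - b * S * (y₂ b) ^ α - a * S = 0) :
    Tendsto y₁ (nhdsWithin 0 (Set.Ioi 0)) (nhds ((a * S) ^ (2 / (p - 1)))) ∧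
    Tendsto y₂ (nhdsWithin 0 (Set.Ioi 0)) atTop := by
  have hp : 0 < p - 1 := by linarith
  have hγ₀ : 0 < γ := by linarith
  have hα : 0 < α := by linarith
  have haS : 0 < a * S := mul_pos ha hS
  set δ := (p - 1) / 2 with hδ_def
  have hδ : 0 < δ := by positivity
  have hδα : δ < α := by linarith
  have hR : 0 < γ * ((p - 1) ^ (p - 1) / (2 * α * S) ^ (2 * α)) ^ (1 / γ) := by
    have := rpow_pos_of_pos hp (p - 1)
    positivity
  have hroots : ∀ᶠ b in 𝓝[>] 0, 0 < b ∧ 0 < y₁ b ∧ y₁ b < y₂ b ∧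
      (y₁ b) ^ δ - b * S * (y₁ b) ^ α - a * S = 0 ∧
      (y₂ b) ^ δ - b * S * (y₂ b) ^ α - a * S = 0 := by
    filter_upwards [self_mem_nhdsWithin, eventually_mul_rpow_lt (div_pos hp hγ₀) hR]
      with b hb hsmall
    exact ⟨hb, hsol b hb hsmall⟩
  rw [show 2 / (p - 1) = δ⁻¹ by rw [hδ_def, inv_div]]
  refine tendsto_nhds_and_tendsto_atTop_of_separated ?_ fun c hc => ?_
  · filter_upwards [hroots] with b ⟨hb, hy₁, _, h₁, _⟩
    exact rpow_inv_le_of_rpow_sub_eq_zero (by positivity) haS.le hδ hy₁ h₁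
  · have hc₀ : 0 < c := (rpow_nonneg haS.le _).trans_lt hc
    have hfc : ∀ᶠ b in 𝓝[>] 0, 0 < c ^ δ - b * S * c ^ α - a * S := by
      have : Tendsto (fun b => c ^ δ - b * S * c ^ α - a * S) (𝓝 0)
          (𝓝 (c ^ δ - 0 * S * c ^ α - a * S)) := (by fun_prop : Continuous _).tendsto 0
      refine nhdsWithin_le_nhds (this.eventually_const_lt ?_)
      simpa using (rpow_inv_lt_iff_of_pos haS.le hc₀.le hδ).1 hc
    filter_upwards [hfc, hroots] with b hfcb ⟨hb, hy₁, hy₁₂, h₁, h₂⟩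
    exact mem_Ioo_of_rpow_sub_eq_zero (mul_pos hb hS) haS hδ hδα hy₁ hy₁₂ hc₀ h₁ h₂ hfcb

theorem stmt8 (p α a S γ : ℝ) (hp1 : 1 < p) (hp2 : p < 2 * α + 1)
    (hα : 0 < α) (ha : 0 < a) (hS : 0 < S)
    (hγ : γ = 2 * α + 1 - p)
    (y₁ y₂ : ℝ → ℝ)
    (hsol : ∀ b : ℝ, 0 < b →
      a * b ^ ((p - 1) / γ) < γ * ((p - 1) ^ (p - 1) / (2 * α * S) ^ (2 * α)) ^ (1 / γ) →
      0 < y₁ b ∧ y₁ b < y₂ b ∧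
      (y₁ b) ^ ((p - 1) / 2) - b * S * (y₁ b) ^ α - a * S = 0 ∧
      (y₂ b) ^ ((p - 1) / 2) - b * S * (y₂ b) ^ α - a * S = 0) :
    Tendsto y₁ (nhdsWithin 0 (Set.Ioi 0)) (nhds ((a * S) ^ (2 / (p - 1)))) ∧
    Tendsto y₂ (nhdsWithin 0 (Set.Ioi 0)) atTop :=
  stmt8_general p α a S γ hp1 hp2 ha hS hγ y₁ y₂ hsol
end

section
/- Let $0<p<1$. Then there is no bounded nontrivial $C^2$ solution of $-\Delta u=u^p$, $u\geq 0$, on all of $\mathbb{R}^N$. That is, if $u\in C^2(\mathbb{R}^N)$ satisfies $u\geq 0$, $\sup_{\mathbb{R}^N}u<\infty$, and $-\Delta u=u^p$ in $\mathbb{R}^N$, then $u\equiv 0$. -/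
open Real

/-- The Laplacian of `u : ℝ^N → ℝ`, as the sum of second partial derivatives. -/
noncomputable def lap {N : ℕ} (u : EuclideanSpace ℝ (Fin N) → ℝ)
    (x : EuclideanSpace ℝ (Fin N)) : ℝ :=
  ∑ i : Fin N, fderiv ℝ (fun y => fderiv ℝ u y (EuclideanSpace.single i 1)) x
    (EuclideanSpace.single i 1)

/-!
If `u > 0` everywhere, concavity of `s ↦ s ^ (1 - p)` together with `-Δu = u ^ p` gives
`-Δ(u ^ (1 - p)) ≥ 1 - p`, so `u ^ (1 - p) + c‖x‖²` with `2Nc < 1 - p` is coercive and has negative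
Laplacian everywhere, which is impossible at its global minimum. Hence `u` vanishes somewhere.
Now `u ≥ 0` is superharmonic; if it were positive somewhere, a zero `y` closest to a positive
point `a` would satisfy the Hopf lemma (comparison with the barrier `exp (-α‖x - a‖²)` on an
annulus), giving `u` a nonzero derivative at `y`, although `y` is a global minimum of `u`.
-/

open Filter Metric Set Topology

theorem IsLocalMin.deriv_deriv_nonneg {f : ℝ → ℝ} {t : ℝ} (hmin : IsLocalMin f t)
    (hf : ContinuousAt f t) : 0 ≤ deriv (deriv f) t := by
  by_contra! hneg
  have hmax : IsLocalMax f t := isLocalMax_of_deriv_deriv_neg hneg hmin.deriv_eq_zero hf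
  have hconst : f =ᶠ[𝓝 t] fun _ => f t := by
    filter_upwards [hmin, hmax] with s h₁ h₂ using le_antisymm h₂ h₁
  have hderiv : deriv f =ᶠ[𝓝 t] fun _ => 0 := by
    filter_upwards [hconst.eventuallyEq_nhds] with s hs
    rw [hs.deriv_eq, deriv_const]
  rw [hderiv.deriv_eq, deriv_const] at hneg
  exact lt_irrefl _ hneg

theorem deriv_deriv_add {F : Type*} [NormedAddCommGroup F] [NormedSpace ℝ F] {f g : ℝ → F}
    {t : ℝ} (hf : ContDiffAt ℝ 2 f t) (hg : ContDiffAt ℝ 2 g t) :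
    deriv (deriv (f + g)) t = deriv (deriv f) t + deriv (deriv g) t := by
  have hsum : deriv (f + g) =ᶠ[𝓝 t] deriv f + deriv g := by
    filter_upwards [hf.eventually (by simp), hg.eventually (by simp)] with s hfs hgs
    exact deriv_add (hfs.differentiableAt (by simp)) (hgs.differentiableAt (by simp))
  rw [hsum.deriv_eq]
  exact deriv_add ((hf.derivWithin (m := 1) (by norm_num)).differentiableAt (by simp))
    ((hg.derivWithin (m := 1) (by norm_num)).differentiableAt (by simp))

theorem deriv_deriv_comp {φ g : ℝ → ℝ} {t : ℝ} (hφ : ContDiffAt ℝ 2 φ (g t))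
    (hg : ContDiffAt ℝ 2 g t) :
    deriv (deriv (φ ∘ g)) t =
      deriv (deriv φ) (g t) * deriv g t ^ 2 + deriv φ (g t) * deriv (deriv g) t := by
  have hchain : deriv (φ ∘ g) =ᶠ[𝓝 t] fun s => deriv φ (g s) * deriv g s := by
    filter_upwards [hg.continuousAt.eventually (hφ.eventually (by simp)),
      hg.eventually (by simp)] with s hφs hgs
    exact deriv_comp s (hφs.differentiableAt (by simp)) (hgs.differentiableAt (by simp))
  have hφ' : DifferentiableAt ℝ (deriv φ) (g t) :=
    (hφ.derivWithin (m := 1) (by norm_num)).differentiableAt (by simp)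
  have hg' : DifferentiableAt ℝ (deriv g) t :=
    (hg.derivWithin (m := 1) (by norm_num)).differentiableAt (by simp)
  have hφg : HasDerivAt (fun s => deriv φ (g s)) (deriv (deriv φ) (g t) * deriv g t) t :=
    hφ'.hasDerivAt.comp t (hg.differentiableAt (by simp)).hasDerivAt
  rw [hchain.deriv_eq, (hφg.fun_mul hg'.hasDerivAt).deriv]
  ring

theorem deriv_deriv_rpow_const {p s : ℝ} (hs : s ≠ 0) :
    deriv (deriv fun s : ℝ => s ^ p) s = p * ((p - 1) * s ^ (p - 2)) := by
  rw [Real.deriv_rpow_const', deriv_const_mul _ (Real.differentiableAt_rpow_const_of_ne _ hs),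
    Real.deriv_rpow_const]
  ring_nf

theorem deriv_const_mul_exp_const_mul (c α : ℝ) :
    deriv (fun s => c * exp (α * s)) = fun s => c * α * exp (α * s) := by
  ext s
  simpa [mul_comm, mul_assoc, mul_left_comm] using
    ((((hasDerivAt_id s).const_mul α).exp).const_mul c).deriv

theorem ContDiffAt.comp_add_smul {E F : Type*} [NormedAddCommGroup E] [NormedSpace ℝ E]
    [NormedAddCommGroup F] [NormedSpace ℝ F] {n : WithTop ℕ∞} {f : E → F} {x : E}
    (hf : ContDiffAt ℝ n f x) (v : E) : ContDiffAt ℝ n (fun t : ℝ => f (x + t • v)) 0 :=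
  ContDiffAt.comp (g := f) 0 (by simpa using hf) (by fun_prop)

section Laplacian

variable {N : ℕ} {f g u : EuclideanSpace ℝ (Fin N) → ℝ} {x : EuclideanSpace ℝ (Fin N)}

theorem lap_eq_sum_deriv_deriv (hf : ContDiffAt ℝ 2 f x) :
    lap f x = ∑ i, deriv (deriv fun t : ℝ => f (x + t • EuclideanSpace.single i (1 : ℝ))) 0 := by
  refine Finset.sum_congr rfl fun i _ => ?_
  set v : EuclideanSpace ℝ (Fin N) := EuclideanSpace.single i 1
  have hline : deriv (fun t : ℝ => f (x + t • v)) =ᶠ[𝓝 0]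
      fun t : ℝ => fderiv ℝ f (x + t • v) v := by
    have hcont : Tendsto (fun t : ℝ => x + t • v) (𝓝 0) (𝓝 x) := by
      simpa using (show Continuous (fun t : ℝ => x + t • v) by fun_prop).tendsto 0
    filter_upwards [hcont.eventually (hf.eventually (by simp))] with t ht
    exact (ht.differentiableAt (by simp)).deriv_comp_add_smul
  have hdiff : DifferentiableAt ℝ (fun y => fderiv ℝ f y v) (x + (0 : ℝ) • v) := by
    rw [zero_smul, add_zero]
    exact ((hf.fderiv_right (m := 1) (by norm_num)).differentiableAt (by simp)).clm_apply
      (differentiableAt_const v)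
  rw [hline.deriv_eq, hdiff.deriv_comp_add_smul, zero_smul, add_zero]

theorem IsLocalMin.lap_nonneg (hmin : IsLocalMin f x) (hf : ContDiffAt ℝ 2 f x) :
    0 ≤ lap f x := by
  rw [lap_eq_sum_deriv_deriv hf]
  refine Finset.sum_nonneg fun i _ => IsLocalMin.deriv_deriv_nonneg ?_
    (hf.comp_add_smul _).continuousAt
  exact IsLocalMin.comp_continuous (g := fun t : ℝ => x + t • EuclideanSpace.single i (1 : ℝ))
    (by simpa using hmin) (by fun_prop)

theorem lap_add (hf : ContDiffAt ℝ 2 f x) (hg : ContDiffAt ℝ 2 g x) :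
    lap (fun z => f z + g z) x = lap f x + lap g x := by
  rw [lap_eq_sum_deriv_deriv (hf.add hg), lap_eq_sum_deriv_deriv hf, lap_eq_sum_deriv_deriv hg,
    ← Finset.sum_add_distrib]
  exact Finset.sum_congr rfl fun i _ =>
    deriv_deriv_add (hf.comp_add_smul _) (hg.comp_add_smul _)

theorem lap_comp {φ : ℝ → ℝ} (hφ : ContDiffAt ℝ 2 φ (f x)) (hf : ContDiffAt ℝ 2 f x) :
    lap (fun z => φ (f z)) x =
      deriv (deriv φ) (f x) *
          ∑ i, deriv (fun t : ℝ => f (x + t • EuclideanSpace.single i (1 : ℝ))) 0 ^ 2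
        + deriv φ (f x) * lap f x := by
  rw [lap_eq_sum_deriv_deriv (f := fun z => φ (f z)) (hφ.comp x hf), lap_eq_sum_deriv_deriv hf,
    Finset.mul_sum, Finset.mul_sum, ← Finset.sum_add_distrib]
  refine Finset.sum_congr rfl fun i _ => ?_
  have := deriv_deriv_comp (by simpa using hφ) (hf.comp_add_smul (EuclideanSpace.single i 1))
  simpa [Function.comp_def] using this

theorem norm_add_smul_single_sub_sq (a : EuclideanSpace ℝ (Fin N)) (i : Fin N) (t : ℝ) :
    ‖x + t • EuclideanSpace.single i (1 : ℝ) - a‖ ^ 2 =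
      ‖x - a‖ ^ 2 + 2 * (x i - a i) * t + t ^ 2 := by
  rw [add_sub_right_comm, norm_add_sq_real, inner_smul_right, EuclideanSpace.inner_single_right,
    norm_smul, PiLp.norm_single, norm_one, mul_one, norm_eq_abs, sq_abs, conj_trivial, one_mul,
    PiLp.sub_apply]
  ring

theorem lap_comp_norm_sub_sq {φ : ℝ → ℝ} (a : EuclideanSpace ℝ (Fin N))
    (hφ : ContDiffAt ℝ 2 φ (‖x - a‖ ^ 2)) :
    lap (fun z => φ (‖z - a‖ ^ 2)) x =
      4 * ‖x - a‖ ^ 2 * deriv (deriv φ) (‖x - a‖ ^ 2) + 2 * N * deriv φ (‖x - a‖ ^ 2) := by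
  have hq : ContDiff ℝ 2 fun z : EuclideanSpace ℝ (Fin N) => ‖z - a‖ ^ 2 :=
    (contDiff_norm_sq ℝ).comp (contDiff_id.sub contDiff_const)
  have hderiv : ∀ i : Fin N,
      deriv (fun t : ℝ => ‖x + t • EuclideanSpace.single i (1 : ℝ) - a‖ ^ 2) =
        fun t => 2 * (x i - a i) + 2 * t := by
    intro i
    simp_rw [norm_add_smul_single_sub_sq]
    ext t
    have := (((hasDerivAt_id t).const_mul (2 * (x i - a i))).const_add (‖x - a‖ ^ 2)).fun_add
      (hasDerivAt_pow 2 t)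
    simpa using this.deriv
  have hsq : ∑ i : Fin N, (2 * (x i - a i) + 2 * 0) ^ 2 = 4 * ‖x - a‖ ^ 2 := by
    simp only [mul_zero, add_zero, mul_pow, ← Finset.mul_sum, EuclideanSpace.real_norm_sq_eq]
    norm_num
  have hderiv2 : ∀ i : Fin N, deriv (fun t : ℝ => 2 * (x i - a i) + 2 * t) 0 = 2 :=
    fun i => by simp
  rw [lap_comp hφ hq.contDiffAt, lap_eq_sum_deriv_deriv hq.contDiffAt]
  simp only [hderiv, hderiv2, hsq, Finset.sum_const, Finset.card_univ, Fintype.card_fin,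
    nsmul_eq_mul]
  ring

theorem lap_const_mul_norm_sq (c : ℝ) (x : EuclideanSpace ℝ (Fin N)) :
    lap (fun z => c * ‖z‖ ^ 2) x = 2 * N * c := by
  simpa using lap_comp_norm_sub_sq (φ := fun s => c * s) (x := x) 0 (by fun_prop)

theorem lap_rpow_le {q : ℝ} (hq0 : 0 ≤ q) (hq1 : q ≤ 1) (hu : ContDiffAt ℝ 2 u x)
    (hx : 0 < u x) : lap (fun z => u z ^ q) x ≤ q * u x ^ (q - 1) * lap u x := by
  rw [lap_comp (contDiffAt_rpow_const_of_ne hx.ne') hu, deriv_deriv_rpow_const hx.ne',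
    Real.deriv_rpow_const]
  have hS : 0 ≤ ∑ i, deriv (fun t : ℝ => u (x + t • EuclideanSpace.single i (1 : ℝ))) 0 ^ 2 :=
    Finset.sum_nonneg fun i _ => sq_nonneg _
  have hcoef : q * ((q - 1) * u x ^ (q - 2)) ≤ 0 :=
    mul_nonpos_of_nonneg_of_nonpos hq0
      (mul_nonpos_of_nonpos_of_nonneg (by linarith) (rpow_nonneg hx.le _))
  nlinarith [mul_nonpos_of_nonpos_of_nonneg hcoef hS]

theorem IsCompact.forall_le_of_lap_neg {w : EuclideanSpace ℝ (Fin N) → ℝ}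
    {K U : Set (EuclideanSpace ℝ (Fin N))} {L : ℝ} (hK : IsCompact K) (hU : IsOpen U)
    (hUK : U ⊆ K) (hwK : ContinuousOn w K) (hwU : ∀ z ∈ U, ContDiffAt ℝ 2 w z)
    (hlap : ∀ z ∈ U, lap w z < 0) (hbdry : ∀ z ∈ K \ U, L ≤ w z) : ∀ z ∈ K, L ≤ w z := by
  intro z hz
  by_contra! hlt
  obtain ⟨z₀, hz₀K, hz₀min⟩ := hK.exists_isMinOn ⟨z, hz⟩ hwK
  have hz₀U : z₀ ∈ U := by
    by_contra h
    exact (hbdry z₀ ⟨hz₀K, h⟩).not_gt ((hz₀min hz).trans_lt hlt)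
  have hloc : IsLocalMin w z₀ := (hz₀min.on_subset hUK).isLocalMin (hU.mem_nhds hz₀U)
  exact (hlap z₀ hz₀U).not_ge (hloc.lap_nonneg (hwU z₀ hz₀U))

theorem exists_nonpos_of_rpow_le_neg_lap {p : ℝ} (hp0 : 0 ≤ p) (hp1 : p < 1)
    (hu : ContDiff ℝ 2 u) (hsuper : ∀ x, u x ^ p ≤ -lap u x) : ∃ x, u x ≤ 0 := by
  by_contra! hpos
  set c : ℝ := (1 - p) / (4 * (N + 1))
  have hc : 0 < c := by positivity
  have hv : ContDiff ℝ 2 fun z => u z ^ (1 - p) := hu.rpow_const_of_ne fun z => (hpos z).ne'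
  have hq : ContDiff ℝ 2 fun z : EuclideanSpace ℝ (Fin N) => c * ‖z‖ ^ 2 :=
    contDiff_const.mul (contDiff_norm_sq ℝ)
  have hcoercive : Tendsto (fun z => u z ^ (1 - p) + c * ‖z‖ ^ 2) (cocompact _) atTop := by
    refine tendsto_atTop_mono (fun z => ?_) ((tendsto_pow_atTop two_ne_zero).comp
      tendsto_norm_cocompact_atTop |>.const_mul_atTop hc)
    simpa using rpow_nonneg (hpos z).le (1 - p)
  obtain ⟨x₀, hx₀⟩ := (hv.add hq).continuous.exists_forall_le hcoercive
  have hv_lap : lap (fun z => u z ^ (1 - p)) x₀ ≤ -(1 - p) := calc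
    _ ≤ (1 - p) * u x₀ ^ (1 - p - 1) * lap u x₀ :=
      lap_rpow_le (by linarith) (by linarith) hu.contDiffAt (hpos x₀)
    _ ≤ (1 - p) * u x₀ ^ (1 - p - 1) * -u x₀ ^ p := by
      gcongr
      · exact mul_nonneg (by linarith) (rpow_nonneg (hpos x₀).le _)
      · linarith [hsuper x₀]
    _ = -(1 - p) := by rw [mul_neg, mul_assoc, ← rpow_add (hpos x₀)]; norm_num
  have hc_lap : 2 * N * c < 1 - p := by
    rw [mul_div_assoc', div_lt_iff₀ (by positivity)]
    nlinarith
  have hmin := IsLocalMin.lap_nonneg (.of_forall hx₀) (hv.add hq).contDiffAt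
  rw [lap_add hv.contDiffAt hq.contDiffAt, lap_const_mul_norm_sq] at hmin
  linarith

theorem smul_sub_mem_posTangentConeAt_annulus {a y : EuclideanSpace ℝ (Fin N)} {d : ℝ}
    (hy : dist y a = d) :
    (1 / 2 : ℝ) • (a - y) ∈ posTangentConeAt (closedBall a d \ ball a (d / 2)) y := by
  refine mem_posTangentConeAt_of_segment_subset ?_
  rw [segment_eq_image']
  rintro _ ⟨θ, ⟨hθ0, hθ1⟩, rfl⟩
  have hdist : dist (y + θ • (y + (1 / 2 : ℝ) • (a - y) - y)) a = (1 - θ / 2) * d := by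
    rw [dist_eq_norm, show y + θ • (y + (1 / 2 : ℝ) • (a - y) - y) - a = (1 - θ / 2) • (y - a) by
      module, norm_smul, Real.norm_of_nonneg (by linarith), ← dist_eq_norm, hy]
  have hd : 0 ≤ d := hy ▸ dist_nonneg
  refine ⟨mem_closedBall.2 ?_, fun h => ?_⟩
  · rw [hdist]; nlinarith
  · rw [mem_ball, hdist] at h; nlinarith

theorem lap_const_mul_exp_neg_mul_norm_sub_sq (c α : ℝ) (a x : EuclideanSpace ℝ (Fin N)) :
    lap (fun z => c * exp (-α * ‖z - a‖ ^ 2)) x =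
      c * α * (4 * α * ‖x - a‖ ^ 2 - 2 * N) * exp (-α * ‖x - a‖ ^ 2) := by
  rw [lap_comp_norm_sub_sq (φ := fun s => c * exp (-α * s)) a (by fun_prop),
    deriv_const_mul_exp_const_mul, deriv_const_mul_exp_const_mul]
  ring

theorem exists_exp_barrier_le {a : EuclideanSpace ℝ (Fin N)} {d α : ℝ} (hd : 0 < d)
    (hα : 2 * N < α * d ^ 2) (hu : ContDiff ℝ 2 u) (hlap : ∀ z ∈ ball a d, lap u z ≤ 0)
    (hpos : ∀ z ∈ ball a d, 0 < u z) :
    ∃ ε > 0, ∀ z ∈ closedBall a d \ ball a (d / 2),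
      ε * exp (-α * ‖z - a‖ ^ 2) - ε * exp (-α * d ^ 2) ≤ u z := by
  have hα0 : 0 < α := by
    by_contra! h; nlinarith [mul_nonpos_of_nonpos_of_nonneg h (sq_nonneg d)]
  have hnonneg : ∀ z ∈ closedBall a d, 0 ≤ u z := by
    rw [← closure_ball a hd.ne']
    exact closure_minimal (fun z hz => (hpos z hz).le) (isClosed_le continuous_const hu.continuous)
  obtain ⟨xm, hxm, hxm_min⟩ := (isCompact_closedBall a (d / 2)).exists_isMinOn
    ⟨a, mem_closedBall_self (by positivity)⟩ hu.continuous.continuousOn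
  have hm : 0 < u xm := hpos xm (closedBall_subset_ball (by linarith) hxm)
  -- `ε` is chosen so that the barrier equals `min u` on the inner sphere
  set ε := u xm * exp (α * (d / 2) ^ 2)
  have hε : 0 < ε := by positivity
  have hε_inner : -ε * exp (-α * (d / 2) ^ 2) = -u xm := by
    rw [neg_mul, mul_assoc, ← exp_add, neg_mul, add_neg_cancel, exp_zero, mul_one]
  refine ⟨ε, hε, fun z hz => ?_⟩
  set K := closedBall a d \ ball a (d / 2)
  set U := ball a d \ closedBall a (d / 2)
  have hq : ContDiff ℝ 2 fun z : EuclideanSpace ℝ (Fin N) => ‖z - a‖ ^ 2 :=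
    (contDiff_norm_sq ℝ).comp (contDiff_id.sub contDiff_const)
  have hg : ContDiff ℝ 2 fun z => -ε * exp (-α * ‖z - a‖ ^ 2) :=
    contDiff_const.mul (contDiff_const.mul hq).exp
  set w := fun z => u z + -ε * exp (-α * ‖z - a‖ ^ 2)
  have hlapw : ∀ z ∈ U, lap w z < 0 := by
    rintro z ⟨hz, hz'⟩
    have hdist : d / 2 < ‖z - a‖ := by simpa [dist_eq_norm] using hz'
    have hq : 2 * N < 4 * α * ‖z - a‖ ^ 2 := by
      nlinarith [mul_lt_mul_of_pos_left (pow_lt_pow_left₀ hdist (by positivity) two_ne_zero) hα0]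
    have hcoef : 0 < ε * α * exp (-α * ‖z - a‖ ^ 2) := by positivity
    rw [lap_add hu.contDiffAt hg.contDiffAt, lap_const_mul_exp_neg_mul_norm_sub_sq]
    nlinarith [hlap z hz, mul_lt_mul_of_pos_left hq hcoef]
  have hbdry : ∀ z ∈ K \ U, -ε * exp (-α * d ^ 2) ≤ w z := by
    rintro z ⟨⟨hzd, hzd'⟩, hzU⟩
    simp only [U, Set.mem_sdiff, mem_ball, mem_closedBall, not_and, not_not, not_lt] at hzd hzd' hzU
    simp only [w, ← dist_eq_norm]
    rcases hzd.lt_or_eq with hlt | heq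
    · have hz2 : dist z a = d / 2 := le_antisymm (hzU hlt) hzd'
      rw [hz2, hε_inner]
      nlinarith [isMinOn_iff.1 hxm_min z (mem_closedBall.2 hz2.le),
        mul_pos hε (exp_pos (-α * d ^ 2))]
    · rw [heq]
      linarith [hnonneg z (mem_closedBall.2 heq.le)]
  have := ((isCompact_closedBall a d).diff isOpen_ball).forall_le_of_lap_neg
    (isOpen_ball.sdiff isClosed_closedBall)
    (sdiff_subset_sdiff ball_subset_closedBall ball_subset_closedBall)
    (hu.add hg).continuous.continuousOn (fun z _ => (hu.add hg).contDiffAt) hlapw hbdry z hz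
  linarith

theorem hopf_lemma {a y : EuclideanSpace ℝ (Fin N)} {d : ℝ} (hd : 0 < d) (hu : ContDiff ℝ 2 u)
    (hlap : ∀ z ∈ ball a d, lap u z ≤ 0) (hpos : ∀ z ∈ ball a d, 0 < u z)
    (hy : dist y a = d) (huy : u y = 0) : 0 < fderiv ℝ u y (a - y) := by
  set α : ℝ := (2 * N + 1) / d ^ 2
  have hα : 2 * N < α * d ^ 2 := by simp only [α]; field_simp; linarith
  have hα0 : 0 < α := by positivity
  obtain ⟨ε, hε, hbarrier⟩ := exists_exp_barrier_le hd hα hu hlap hpos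
  set w := fun z => u z - ε * exp (-α * ‖z - a‖ ^ 2)
  have hya : ‖y - a‖ = d := by rw [← dist_eq_norm, hy]
  have hmin : IsMinOn w (closedBall a d \ ball a (d / 2)) y := fun z hz => by
    show w y ≤ w z
    simp only [w, hya, huy]
    linarith [hbarrier z hz]
  have hderiv : HasFDerivAt w (fderiv ℝ u y - ε • (exp (-α * ‖y - a‖ ^ 2) •
      (-α) • (2 • (innerSL ℝ (y - a)).comp (ContinuousLinearMap.id ℝ _)))) y :=
    (hu.differentiable (by simp) y).hasFDerivAt.sub
      ((((hasFDerivAt_id y).sub_const a).norm_sq.const_mul (-α)).exp.const_mul ε)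
  have hdir := hmin.localize.hasFDerivWithinAt_nonneg hderiv.hasFDerivWithinAt
    (smul_sub_mem_posTangentConeAt_annulus hy)
  have hinner : inner ℝ (y - a) (a - y) = -d ^ 2 := by
    rw [← neg_sub a y, inner_neg_left, real_inner_self_eq_norm_sq, ← dist_eq_norm, dist_comm, hy]
  simp only [map_smul, sub_apply, smul_apply, ContinuousLinearMap.comp_id, innerSL_apply_apply,
    hinner, hya, nsmul_eq_mul, Nat.cast_ofNat, smul_eq_mul] at hdir
  have : 0 < ε * α * exp (-α * d ^ 2) * d ^ 2 := by positivity
  nlinarith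

theorem eq_zero_of_lap_nonpos (hu : ContDiff ℝ 2 u) (hnonneg : ∀ x, 0 ≤ u x)
    (hlap : ∀ x, lap u x ≤ 0) {y₀ : EuclideanSpace ℝ (Fin N)} (hy₀ : u y₀ = 0) :
    ∀ x, u x = 0 := by
  by_contra! ⟨a, ha⟩
  have hZ : IsClosed (u ⁻¹' {0}) := isClosed_singleton.preimage hu.continuous
  obtain ⟨y, hy, hdist⟩ := hZ.exists_infDist_eq_dist ⟨y₀, hy₀⟩ a
  have hd : 0 < dist a y := dist_pos.2 fun h => ha (h ▸ hy)
  have hpos : ∀ z ∈ ball a (dist a y), 0 < u z := fun z hz => (hnonneg z).lt_of_ne' fun h =>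
    (infDist_le_dist_of_mem (x := a) (show z ∈ u ⁻¹' {0} from h)).not_gt
      (hdist ▸ by simpa [dist_comm] using hz)
  have hgrad := hopf_lemma hd hu (fun z _ => hlap z) hpos (dist_comm y a) hy
  rw [IsLocalMin.fderiv_eq_zero (.of_forall fun z => (hy ▸ hnonneg z : u y ≤ u z))] at hgrad
  exact lt_irrefl _ hgrad

end Laplacian

theorem stmt10_general (N : ℕ) (p : ℝ) (hp0 : 0 < p) (hp1 : p < 1)
    (u : EuclideanSpace ℝ (Fin N) → ℝ)
    (hreg : ContDiff ℝ 2 u)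
    (hnonneg : ∀ x, 0 ≤ u x)
    (heq : ∀ x, -(lap u x) = (u x) ^ p) :
    ∀ x, u x = 0 := by
  obtain ⟨y, hy⟩ := exists_nonpos_of_rpow_le_neg_lap hp0.le hp1 hreg fun x => (heq x).ge
  exact eq_zero_of_lap_nonpos hreg hnonneg
    (fun x => by linarith [heq x, rpow_nonneg (hnonneg x) p]) (le_antisymm hy (hnonneg y))

theorem stmt10 (N : ℕ) (p : ℝ) (hp0 : 0 < p) (hp1 : p < 1)
    (u : EuclideanSpace ℝ (Fin N) → ℝ)
    (hreg : ContDiff ℝ 2 u)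
    (hnonneg : ∀ x, 0 ≤ u x)
    (hbdd : BddAbove (Set.range u))
    (heq : ∀ x, -(lap u x) = (u x) ^ p) :
    ∀ x, u x = 0 :=
  stmt10_general N p hp0 hp1 u hreg hnonneg heq
end
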